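/- In the shift space X_g^d, for any finite W ⊆ Z^d and any globally admissible boundary configuration δ on ∂W, there exists a unique configuration θ_δ on W, maximal in the coordinatewise order, such that θ_δ δ is globally admissible and w ≼ θ_δ for every configuration w on W such that wδ is locally admissible. Moreover, the sitewise maximum of two configurations that are locally admissible with δ is again locally admissible with δ. -/

import Mathlib

open Classical

abbrev Site (d : ℕ) := Fin d → ℤ

def dist1 {d : ℕ} (p q : Site d) : ℕ := ∑ i, (p i - q i).natAbs

def unitVec {d : ℕ} (i : Fin d) : Site d := fun j => if j = i then 1 else 0

def bd {d : ℕ} (S : Set (Site d)) : Set (Site d) :=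
  {p | p ∉ S ∧ ∃ q ∈ S, dist1 p q = 1}

def globallyAdm {d : ℕ} {A : Type*} (X : Set (Site d → A)) (S : Set (Site d))
    (u : Site d → A) : Prop := ∃ x ∈ X, ∀ p ∈ S, x p = u p

/-- The nearest-neighbour SFT `X_g^d` over alphabet `{0, 1, …, g}` where adjacent sites
differ by at most `1`. -/
def Xgd (g d : ℕ) : Set (Site d → ℤ) :=
  {x | (∀ p : Site d, 0 ≤ x p ∧ x p ≤ g) ∧
       ∀ (p : Site d) (i : Fin d), |x p - x (p + unitVec i)| ≤ 1}

/-- `w δ` is locally admissible for `X_g^d`: `w` (on `W`) takes values in `{0,…,g}` and no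
edge inside `W ∪ ∂W` of the combined configuration (`w` on `W`, `δ` on `∂W`) has a
difference larger than `1`. -/
def locAdmWith (g : ℕ) {d : ℕ} (W : Set (Site d)) (w δ : Site d → ℤ) : Prop :=
  (∀ p ∈ W, 0 ≤ w p ∧ w p ≤ g) ∧
  ∀ p ∈ W ∪ bd W, ∀ i : Fin d, p + unitVec i ∈ W ∪ bd W →
    |(if p ∈ W then w p else δ p) -
      (if p + unitVec i ∈ W then w (p + unitVec i) else δ (p + unitVec i))| ≤ 1

/-! Sitewise maxima preserve local admissibility because
`|max a b - max c d| ≤ max |a - c| |b - d|`. On the finite set `W` there are only finitely many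
locally admissible configurations, so their sitewise maximum `θ_δ` is the greatest one. Since
`X_g^d` is nearest-neighbour, a configuration locally admissible with `δ` becomes a point of
`X_g^d` when glued outside `W` to any point witnessing the global admissibility of `δ`; conversely
every such point restricts to a locally admissible configuration. -/

lemma SupClosed.exists_isGreatest_of_finite {α : Type*} [SemilatticeSup α] {s : Set α}
    (hs : SupClosed s) (hfin : s.Finite) (hne : s.Nonempty) : ∃ a, IsGreatest s a :=
  ⟨hfin.toFinset.sup' (by simpa using hne) id,
    hs.finsetSup'_mem _ fun _ h => hfin.mem_toFinset.mp h,
    fun _ h => Finset.le_sup' id (hfin.mem_toFinset.mpr h)⟩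

lemma Set.Finite.setOf_mapsTo_eqOn_compl {α β : Type*} {W : Set α} {s : Set β}
    (hW : W.Finite) (hs : s.Finite) (b : β) :
    {f : α → β | (∀ p ∈ W, f p ∈ s) ∧ ∀ p ∉ W, f p = b}.Finite := by
  have := hW.to_subtype
  have := hs.to_subtype
  refine (Set.finite_range fun (f : W → s) (p : α) =>
    if h : p ∈ W then (f ⟨p, h⟩ : β) else b).subset ?_
  rintro f ⟨hin, hout⟩
  exact ⟨fun p => ⟨f p, hin p p.2⟩, funext fun p => by by_cases h : p ∈ W <;> simp [h, hout]⟩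

lemma dist1_comm {d : ℕ} (p q : Site d) : dist1 p q = dist1 q p := by
  refine Finset.sum_congr rfl fun i _ => ?_
  rw [← Int.natAbs_neg, neg_sub]

lemma dist1_add_unitVec {d : ℕ} (p : Site d) (i : Fin d) : dist1 p (p + unitVec i) = 1 := by
  simp [dist1, unitVec, apply_ite]

lemma add_unitVec_mem_bd {d : ℕ} {W : Set (Site d)} {p : Site d} {i : Fin d} (hp : p ∈ W)
    (hq : p + unitVec i ∉ W) : p + unitVec i ∈ bd W :=
  ⟨hq, p, hp, by rw [dist1_comm, dist1_add_unitVec]⟩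

lemma mem_bd_of_add_unitVec_mem {d : ℕ} {W : Set (Site d)} {p : Site d} {i : Fin d}
    (hp : p ∉ W) (hq : p + unitVec i ∈ W) : p ∈ bd W :=
  ⟨hp, p + unitVec i, hq, dist1_add_unitVec p i⟩

section locAdmWith

variable {g d : ℕ} {W : Set (Site d)} {w w' δ : Site d → ℤ}

lemma locAdmWith.sup {w₁ w₂ : Site d → ℤ} (h₁ : locAdmWith g W w₁ δ)
    (h₂ : locAdmWith g W w₂ δ) : locAdmWith g W (w₁ ⊔ w₂) δ := by
  have glue_sup : ∀ p, (if p ∈ W then (w₁ ⊔ w₂) p else δ p)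
      = max (if p ∈ W then w₁ p else δ p) (if p ∈ W then w₂ p else δ p) := by
    intro p; split_ifs <;> simp
  refine ⟨fun p hp => ⟨le_max_of_le_left (h₁.1 p hp).1, max_le (h₁.1 p hp).2 (h₂.1 p hp).2⟩,
    fun p hp i hq => ?_⟩
  rw [glue_sup, glue_sup]
  exact (abs_max_sub_max_le_max _ _ _ _).trans (max_le (h₁.2 p hp i hq) (h₂.2 p hp i hq))

lemma locAdmWith_congr (h : ∀ p ∈ W, w p = w' p) :
    locAdmWith g W w δ ↔ locAdmWith g W w' δ := by
  have glue_eq : ∀ p, (if p ∈ W then w p else δ p) = (if p ∈ W then w' p else δ p) := by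
    intro p; split_ifs with hp
    exacts [h p hp, rfl]
  simp only [locAdmWith, glue_eq]
  exact and_congr_left' (forall₂_congr fun p hp => by rw [h p hp])

lemma locAdmWith.indicator (hw : locAdmWith g W w δ) : locAdmWith g W (W.indicator w) δ :=
  (locAdmWith_congr fun _ hp => (Set.indicator_of_mem hp w).symm).mp hw

lemma locAdmWith_of_mem_Xgd {x : Site d → ℤ} (hx : x ∈ Xgd g d) (hxW : ∀ p ∈ W, x p = w p)
    (hxδ : ∀ p ∈ bd W, x p = δ p) : locAdmWith g W w δ := by
  have glue_eq : ∀ p ∈ W ∪ bd W, (if p ∈ W then w p else δ p) = x p := by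
    intro p hp
    split_ifs with h
    exacts [(hxW p h).symm, (hxδ p (hp.resolve_left h)).symm]
  refine ⟨fun p hp => hxW p hp ▸ hx.1 p, fun p hp i hq => ?_⟩
  rw [glue_eq p hp, glue_eq _ hq]
  exact hx.2 p i

lemma exists_mem_Xgd_of_locAdmWith (hδ : globallyAdm (Xgd g d) (bd W) δ)
    (hw : locAdmWith g W w δ) :
    ∃ x ∈ Xgd g d, (∀ p ∈ W, x p = w p) ∧ ∀ p ∈ bd W, x p = δ p := by
  obtain ⟨y, hy, hyδ⟩ := hδ
  have glue_eq : ∀ p ∈ W ∪ bd W, (if p ∈ W then w p else δ p) = W.piecewise w y p := by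
    intro p hp
    by_cases h : p ∈ W
    · simp [h]
    · simp [h, hyδ p (hp.resolve_left h)]
  refine ⟨W.piecewise w y, ⟨fun p => ?_, fun p i => ?_⟩, fun p hp => by simp [hp],
    fun p hp => by simp [hp.1, hyδ p hp]⟩
  · by_cases h : p ∈ W
    · simpa [h] using hw.1 p h
    · simpa [h] using hy.1 p
  · by_cases hout : p ∉ W ∧ p + unitVec i ∉ W
    · simpa [hout.1, hout.2] using hy.2 p i
    have hp : p ∈ W ∪ bd W := by
      by_cases h : p ∈ W
      · exact Or.inl h
      · exact Or.inr (mem_bd_of_add_unitVec_mem h (not_not.mp fun h' => hout ⟨h, h'⟩))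
    have hq : p + unitVec i ∈ W ∪ bd W := by
      by_cases h : p + unitVec i ∈ W
      · exact Or.inl h
      · exact Or.inr (add_unitVec_mem_bd (not_not.mp fun h' => hout ⟨h', h⟩) h)
    rw [← glue_eq p hp, ← glue_eq _ hq]
    exact hw.2 p hp i hq

lemma exists_greatest_locAdmWith (hW : W.Finite) (hδ : globallyAdm (Xgd g d) (bd W) δ) :
    ∃ θ, locAdmWith g W θ δ ∧ ∀ w, locAdmWith g W w δ → ∀ p ∈ W, w p ≤ θ p := by
  -- normalising off `W` leaves only finitely many configurations
  set S := {w | locAdmWith g W w δ ∧ ∀ p ∉ W, w p = 0}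
  have hS_finite : S.Finite :=
    ((hW.setOf_mapsTo_eqOn_compl (Set.finite_Icc 0 (g : ℤ)) 0).subset
      fun w hw => ⟨fun p hp => hw.1.1 p hp, hw.2⟩)
  have hS_sup : SupClosed S := fun a ha b hb =>
    ⟨ha.1.sup hb.1, fun p hp => by simp [ha.2 p hp, hb.2 p hp]⟩
  have mem_S : ∀ w, locAdmWith g W w δ → W.indicator w ∈ S := fun w hw =>
    ⟨hw.indicator, fun _ hp => Set.indicator_of_notMem hp w⟩
  obtain ⟨y, hy, hyδ⟩ := hδ
  obtain ⟨θ, hθS, hθ⟩ := hS_sup.exists_isGreatest_of_finite hS_finite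
    ⟨_, mem_S y (locAdmWith_of_mem_Xgd hy (fun _ _ => rfl) hyδ)⟩
  refine ⟨θ, hθS.1, fun w hw p hp => ?_⟩
  simpa [hp] using hθ (mem_S w hw) p

end locAdmWith

/-- Existence and uniqueness of the maximal configuration `θ_δ` on `W` for a globally
admissible boundary configuration `δ` on `∂W`, together with the fact that the sitewise
maximum of two configurations locally admissible with `δ` is again locally admissible. -/
theorem xgd_maximal_configuration {g d : ℕ} (W : Set (Site d)) (hW : W.Finite)
    (δ : Site d → ℤ) (hδ : globallyAdm (Xgd g d) (bd W) δ) :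
    (∃ θ : Site d → ℤ,
      (∃ x ∈ Xgd g d, (∀ p ∈ W, x p = θ p) ∧ ∀ p ∈ bd W, x p = δ p) ∧
      (∀ w : Site d → ℤ, locAdmWith g W w δ → ∀ p ∈ W, w p ≤ θ p) ∧
      ∀ θ' : Site d → ℤ,
        (∃ x ∈ Xgd g d, (∀ p ∈ W, x p = θ' p) ∧ ∀ p ∈ bd W, x p = δ p) →
        (∀ w : Site d → ℤ, locAdmWith g W w δ → ∀ p ∈ W, w p ≤ θ' p) →
        ∀ p ∈ W, θ' p = θ p) ∧
    ∀ w₁ w₂ : Site d → ℤ, locAdmWith g W w₁ δ → locAdmWith g W w₂ δ →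
      locAdmWith g W (fun p => max (w₁ p) (w₂ p)) δ := by
  obtain ⟨θ, hθ, hθ_ge⟩ := exists_greatest_locAdmWith hW hδ
  refine ⟨⟨θ, exists_mem_Xgd_of_locAdmWith hδ hθ, hθ_ge, ?_⟩, fun _ _ h₁ h₂ => h₁.sup h₂⟩
  rintro θ' ⟨x, hx, hxW, hxδ⟩ hθ'_ge p hp
  exact le_antisymm (hθ_ge θ' (locAdmWith_of_mem_Xgd hx hxW hxδ) p hp) (hθ'_ge θ hθ p hp)
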